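/- arXiv:2401.09064 — 5 statements merged into one kernel-verified Lean document; each statement's English description precedes it below -/
import Mathlib

section
/- The function f(R_A) = √((1 - R_SD)² + 2·R_A·R_SD) / R_A is strictly decreasing in R_A on (0, 2] for any fixed R_SD > 0 with (1 - R_SD)² + 2·R_A·R_SD > 0. -/
theorem stmt2 (RSD : ℝ) (hRSD : 0 < RSD)
    (hpos : ∀ RA ∈ Set.Ioc (0 : ℝ) 2, (1 - RSD) ^ 2 + 2 * RA * RSD > 0) :
    StrictAntiOn (fun RA : ℝ => Real.sqrt ((1 - RSD) ^ 2 + 2 * RA * RSD) / RA)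
      (Set.Ioc (0 : ℝ) 2) := by
  intro a ha b hb hab
  have ha0 : 0 < a := ha.1
  have hb0 : 0 < b := hb.1
  have hX : 0 ≤ (1 - RSD) ^ 2 + 2 * b * RSD := le_of_lt (hpos b hb)
  have hY : 0 ≤ (1 - RSD) ^ 2 + 2 * a * RSD := le_of_lt (hpos a ha)
  simp only
  rw [div_lt_div_iff₀ hb0 ha0]
  have key : (Real.sqrt ((1 - RSD) ^ 2 + 2 * b * RSD) * a) ^ 2
      < (Real.sqrt ((1 - RSD) ^ 2 + 2 * a * RSD) * b) ^ 2 := by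
    rw [mul_pow, mul_pow, Real.sq_sqrt hX, Real.sq_sqrt hY]
    have h1 : 0 ≤ (1 - RSD) ^ 2 * ((b - a) * (b + a)) :=
      mul_nonneg (sq_nonneg _) (mul_nonneg (by linarith) (by linarith))
    have h2 : 0 < 2 * RSD * (a * b) * (b - a) :=
      mul_pos (mul_pos (by linarith) (mul_pos ha0 hb0)) (by linarith)
    nlinarith [h1, h2]
  exact lt_of_pow_lt_pow_left₀ 2
    (mul_nonneg (Real.sqrt_nonneg _) hb0.le) key
end

section
/- Let K be a positive even integer, K_all ≥ K an integer, and let φ range over vectors (φ_0, ..., φ_{K-1}) of integers with 0 ≤ φ_k ≤ K_all - 1. Define S_{φ,1} = (1/K)Σ_k φ_k and S_{φ,2} = (1/K)Σ_k φ_k², and L(φ) = S_{φ,2} - S_{φ,1}². Then L is maximized (over vectors with distinct entries) by taking φ to consist of the K/2 smallest indices {0, 1, ..., K/2 - 1} together with the K/2 largest indices {K_all - K/2, ..., K_all - 1}. -/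
/-!
Put `m = Kall - 1`. For any centre `c`, the variance is `(1/K) ∑ (φ k - c)^2 - (mean - c)^2`; with
`c = m / 2` this reads `(m/2)^2 - (1/K) ∑ φ k (m - φ k) - (mean - m/2)^2`. The two-ended vector is
symmetric about `m / 2`, so its last term vanishes, and it remains to show that it minimises
`∑ φ k (m - φ k)`. The weight `x (m - x)` depends only on the distance `d = min x (m - x)` of `x`
to the ends of `[0, m]` and increases with it. Each distance is attained by at most two points, so
the `i`-th smallest distance among `K` distinct points of `[0, m]` is at least `⌊i/2⌋`, and the
two-ended vector attains all these bounds at once.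
-/

/-- empirical variance of an index vector -/
noncomputable def Lvar (K : ℕ) (φ : Fin K → ℤ) : ℝ :=
  (1 / K) * ∑ k, ((φ k : ℝ)) ^ 2 - ((1 / K) * ∑ k, ((φ k : ℝ))) ^ 2

open Finset

theorem Finset.sum_range_card_le_sum_of_monotoneOn {M : Type*} [AddCommMonoid M] [PartialOrder M]
    [IsOrderedAddMonoid M] {g : ℕ → M} {N : ℕ} (hg : MonotoneOn g (Set.Iic N)) (S : Finset ℕ)
    (hS : ∀ x ∈ S, x ≤ N) : ∑ i ∈ range #S, g i ≤ ∑ x ∈ S, g x := by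
  induction S using Finset.induction_on_max with
  | empty => simp
  | insert a S hlt ih =>
    have haS : a ∉ S := fun h => (hlt a h).false
    have hcard : #S ≤ a := by simpa using card_le_card (subset_range.mpr hlt)
    have haN : a ≤ N := hS a (mem_insert_self a S)
    rw [card_insert_of_notMem haS, sum_range_succ, sum_insert haS, add_comm]
    exact add_le_add (hg (Set.mem_Iic.mpr (hcard.trans haN)) (Set.mem_Iic.mpr haN) hcard)
      (ih fun x hx => hS x (mem_insert_of_mem hx))

theorem Lvar_eq_half_sq_sub (K : ℕ) (hK : K ≠ 0) (φ : Fin K → ℤ) (m : ℝ) :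
    Lvar K φ = (m / 2) ^ 2 - (1 / K) * ∑ k, (φ k : ℝ) * (m - φ k)
      - ((1 / K) * ∑ k, (φ k : ℝ) - m / 2) ^ 2 := by
  have hK' : (K : ℝ) ≠ 0 := Nat.cast_ne_zero.mpr hK
  simp only [Lvar, mul_sub, sum_sub_distrib, ← sum_mul]
  field_simp
  ring

/-- Ranks `x ∈ [0, m]` by its distance to the nearer endpoint: for `2d ≤ m`, the point `d` gets
`2d` and its mirror `m - d` gets `2d + 1`. -/
def foldIdx (m x : ℤ) : ℕ :=
  if x ≤ m - x then 2 * x.toNat else 2 * (m - x).toNat + 1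

def foldWeight (m : ℤ) (i : ℕ) : ℤ :=
  ((i / 2 : ℕ) : ℤ) * (m - (i / 2 : ℕ))

theorem foldIdx_injOn (m : ℤ) : Set.InjOn (foldIdx m) (Set.Icc 0 m) := by
  intro x hx y hy hxy
  simp only [Set.mem_Icc, foldIdx] at hx hy hxy
  split_ifs at hxy <;> omega

theorem foldIdx_le_toNat {m x : ℤ} (hx : x ∈ Set.Icc 0 m) : foldIdx m x ≤ m.toNat := by
  simp only [Set.mem_Icc, foldIdx] at hx ⊢
  split_ifs <;> omega

theorem foldWeight_foldIdx {m x : ℤ} (hx : x ∈ Set.Icc 0 m) :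
    foldWeight m (foldIdx m x) = x * (m - x) := by
  simp only [Set.mem_Icc] at hx
  unfold foldWeight foldIdx
  split_ifs
  · rw [show 2 * x.toNat / 2 = x.toNat by omega, Int.toNat_of_nonneg hx.1]
  · rw [show (2 * (m - x).toNat + 1) / 2 = (m - x).toNat by omega, Int.toNat_of_nonneg (by omega)]
    ring

theorem foldWeight_monotoneOn (m : ℤ) : MonotoneOn (foldWeight m) (Set.Iic m.toNat) := by
  intro i hi j hj hij
  simp only [Set.mem_Iic] at hi hj
  obtain rfl | hlt := hij.eq_or_lt
  · rfl
  have hab : i / 2 ≤ j / 2 := Nat.div_le_div_right hij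
  have hsum : ((i / 2 : ℕ) : ℤ) + (j / 2 : ℕ) ≤ m := by omega
  unfold foldWeight
  nlinarith [(Int.ofNat_le.mpr hab : ((i / 2 : ℕ) : ℤ) ≤ (j / 2 : ℕ))]

section

variable {ι : Type*} [Fintype ι] {m : ℤ} {ψ : ι → ℤ}

theorem sum_mul_sub_eq_sum_image_foldIdx (hinj : Function.Injective ψ)
    (hψ : ∀ k, ψ k ∈ Set.Icc 0 m) :
    ∑ k, ψ k * (m - ψ k) = ∑ i ∈ univ.image (fun k => foldIdx m (ψ k)), foldWeight m i := by
  rw [sum_image fun k _ l _ h => hinj (foldIdx_injOn m (hψ k) (hψ l) h)]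
  exact sum_congr rfl fun k _ => (foldWeight_foldIdx (hψ k)).symm

theorem sum_range_foldWeight_le (hinj : Function.Injective ψ) (hψ : ∀ k, ψ k ∈ Set.Icc 0 m) :
    ∑ i ∈ range (Fintype.card ι), foldWeight m i ≤ ∑ k, ψ k * (m - ψ k) := by
  have hcard : #(univ.image (fun k => foldIdx m (ψ k))) = Fintype.card ι :=
    card_image_of_injective _ fun k l h => hinj (foldIdx_injOn m (hψ k) (hψ l) h)
  rw [sum_mul_sub_eq_sum_image_foldIdx hinj hψ, ← hcard]
  refine sum_range_card_le_sum_of_monotoneOn (foldWeight_monotoneOn m) _ ?_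
  simp only [mem_image, mem_univ, true_and, forall_exists_index, forall_apply_eq_imp_iff]
  exact fun k => foldIdx_le_toNat (hψ k)

theorem sum_mul_sub_eq_sum_range_foldWeight (hinj : Function.Injective ψ)
    (hψ : ∀ k, ψ k ∈ Set.Icc 0 m) (hlt : ∀ k, foldIdx m (ψ k) < Fintype.card ι) :
    ∑ k, ψ k * (m - ψ k) = ∑ i ∈ range (Fintype.card ι), foldWeight m i := by
  have hcard : #(univ.image (fun k => foldIdx m (ψ k))) = Fintype.card ι :=
    card_image_of_injective _ fun k l h => hinj (foldIdx_injOn m (hψ k) (hψ l) h)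
  have himage : univ.image (fun k => foldIdx m (ψ k)) = range (Fintype.card ι) :=
    eq_of_subset_of_card_le (by simpa [subset_iff] using hlt) (by simp [hcard])
  rw [sum_mul_sub_eq_sum_image_foldIdx hinj hψ, himage]

end

def outerIndices (K Kall : ℕ) (k : Fin K) : ℤ :=
  if (k : ℕ) < K / 2 then (k : ℤ) else (Kall : ℤ) - (K : ℤ) + (k : ℤ)

section

variable {K Kall : ℕ}

theorem outerIndices_rev (hK : Even K) (k : Fin K) :
    outerIndices K Kall k.rev = (Kall - 1 : ℤ) - outerIndices K Kall k := by
  obtain ⟨n, rfl⟩ := hK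
  have := k.isLt
  simp only [outerIndices, Fin.val_rev]
  split_ifs <;> omega

theorem sum_outerIndices (hK : Even K) :
    ∑ k, (outerIndices K Kall k : ℝ) = K * ((Kall : ℝ) - 1) / 2 := by
  have h := Equiv.sum_comp Fin.revPerm fun k => (outerIndices K Kall k : ℝ)
  simp only [Fin.revPerm_apply, outerIndices_rev hK, Int.cast_sub, Int.cast_natCast,
    Int.cast_one, sum_sub_distrib, sum_const, card_univ, Fintype.card_fin, nsmul_eq_mul] at h
  linarith

theorem outerIndices_mem_Icc (hKle : K ≤ Kall) (k : Fin K) :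
    outerIndices K Kall k ∈ Set.Icc 0 (Kall - 1 : ℤ) := by
  have := k.isLt
  simp only [outerIndices, Set.mem_Icc]
  split_ifs <;> omega

theorem outerIndices_injective (hKle : K ≤ Kall) : Function.Injective (outerIndices K Kall) := by
  intro k l h
  have := k.isLt
  simp only [outerIndices] at h
  ext
  split_ifs at h <;> omega

theorem foldIdx_outerIndices_lt (hK : Even K) (hKle : K ≤ Kall) (k : Fin K) :
    foldIdx (Kall - 1) (outerIndices K Kall k) < K := by
  obtain ⟨n, rfl⟩ := hK
  have := k.isLt
  simp only [foldIdx, outerIndices]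
  split_ifs <;> omega

end

theorem stmt7 (K Kall : ℕ) (hK : 0 < K) (hKeven : Even K) (hKle : K ≤ Kall)
    (φ : Fin K → ℤ) (hinj : Function.Injective φ)
    (hbound : ∀ k, 0 ≤ φ k ∧ φ k ≤ (Kall : ℤ) - 1)
    (φopt : Fin K → ℤ)
    (hopt : ∀ k : Fin K,
      φopt k = if (k : ℕ) < K / 2 then (k : ℤ) else (Kall : ℤ) - (K : ℤ) + (k : ℤ)) :
    Lvar K φ ≤ Lvar K φopt := by
  obtain rfl : φopt = outerIndices K Kall := funext hopt
  have hmin : ∑ k, (outerIndices K Kall k : ℝ) * ((Kall : ℝ) - 1 - outerIndices K Kall k)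
      ≤ ∑ k, (φ k : ℝ) * ((Kall : ℝ) - 1 - φ k) := by
    have h := sum_range_foldWeight_le hinj hbound
    rw [← sum_mul_sub_eq_sum_range_foldWeight (outerIndices_injective hKle)
      (outerIndices_mem_Icc hKle) (by simpa using foldIdx_outerIndices_lt hKeven hKle)] at h
    exact_mod_cast h
  rw [Lvar_eq_half_sq_sub K hK.ne' _ ((Kall : ℝ) - 1),
    Lvar_eq_half_sq_sub K hK.ne' _ ((Kall : ℝ) - 1), sum_outerIndices hKeven]
  have hmean : 1 / (K : ℝ) * (K * ((Kall : ℝ) - 1) / 2) - ((Kall : ℝ) - 1) / 2 = 0 := by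
    field_simp
    ring
  rw [hmean]
  have := mul_le_mul_of_nonneg_left hmin (by positivity : (0 : ℝ) ≤ 1 / K)
  linarith [sq_nonneg (1 / (K : ℝ) * ∑ k, (φ k : ℝ) - ((Kall : ℝ) - 1) / 2)]
end

section
/- Let K be even, K_all a positive integer, T0 > 0, and let φ̃ ∈ ℤ^{K/2}. Define the index vector φ = (φ̃, K_all - 1 - φ̃) ∈ ℤ^K (i.e., symmetric against the point (K_all - 1)/2). Then for every real f_d, |(1/K) Σ_{k=0}^{K-1} e^{i 2π φ_k T0 f_d}| = |cos(π(K_all - 1)T0 f_d - arg(Σ_{k=0}^{K/2-1} e^{i2π φ̃_k T0 f_d}))| · |(2/K) Σ_{k=0}^{K/2-1} e^{i2π φ̃_k T0 f_d}|; in particular |(1/K) Σ_{k=0}^{K-1} e^{i2π φ_k T0 f_d}| ≤ |(2/K) Σ_{k=0}^{K/2-1} e^{i2π φ̃_k T0 f_d}|. -/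
/-!
Reflecting the indexes about `(K_all - 1)/2` conjugates each phasor and rotates it by the common
phase `θ = 2π(K_all - 1)T0 f_d`, so the full sum is `S + e^{iθ} conj S` with `S` the half sum.
Factoring out `e^{iθ/2}` leaves `2 Re(e^{-iθ/2} S) = 2‖S‖ cos(arg S - θ/2)`.
-/

open Complex Real
open scoped ComplexConjugate

lemma sum_exp_sub_mul_I {ι : Type*} (s : Finset ι) (c : ℝ) (a : ι → ℝ) :
    ∑ k ∈ s, cexp ((c - a k : ℝ) * I) = cexp (c * I) * conj (∑ k ∈ s, cexp (a k * I)) := by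
  rw [map_sum, Finset.mul_sum]
  refine Finset.sum_congr rfl fun k _ => ?_
  rw [← Complex.exp_conj, ← Complex.exp_add]
  congr 1
  simp only [map_mul, conj_ofReal, conj_I]
  push_cast
  ring

lemma norm_add_exp_mul_conj (z : ℂ) (θ : ℝ) :
    ‖z + cexp (θ * I) * conj z‖ = 2 * |Real.cos (θ / 2 - arg z)| * ‖z‖ := by
  set w := cexp (-(θ / 2 : ℝ) * I) * z
  have hrot : z + cexp (θ * I) * conj z = cexp ((θ / 2 : ℝ) * I) * (w + conj w) := by
    simp only [w, map_mul, ← Complex.exp_conj, map_neg, conj_ofReal, conj_I]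
    rw [mul_add, ← mul_assoc, ← mul_assoc, ← Complex.exp_add, ← Complex.exp_add]
    push_cast
    ring_nf
    rw [Complex.exp_zero, mul_one]
  have hpolar : w = ‖z‖ * cexp ((arg z - θ / 2 : ℝ) * I) := by
    simp only [w]
    conv_lhs => rw [← norm_mul_exp_arg_mul_I z]
    rw [mul_left_comm, ← Complex.exp_add]
    push_cast
    ring_nf
  have hre : w.re = ‖z‖ * Real.cos (arg z - θ / 2) := by
    rw [hpolar, re_ofReal_mul, exp_ofReal_mul_I_re]
  rw [hrot, norm_mul, norm_exp_ofReal_mul_I, one_mul, add_conj, norm_real, Real.norm_eq_abs, hre,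
    abs_mul, abs_mul, abs_two, abs_norm, ← Real.cos_neg, neg_sub]
  ring

theorem stmt8_general (K Kall : ℕ)
    (T0 fd : ℝ) (φt : ℕ → ℤ)
    (S : ℂ)
    (hS : S = ∑ k ∈ Finset.range (K / 2),
      Complex.exp (2 * π * (φt k : ℝ) * T0 * fd * Complex.I)) :
    ‖((1 / (K : ℂ)) *
        (∑ k ∈ Finset.range (K / 2),
            Complex.exp (2 * π * (φt k : ℝ) * T0 * fd * Complex.I) +
          ∑ k ∈ Finset.range (K / 2),
            Complex.exp (2 * π * ((Kall : ℝ) - 1 - (φt k : ℝ)) * T0 * fd * Complex.I)))‖ =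
      |Real.cos (π * ((Kall : ℝ) - 1) * T0 * fd - Complex.arg S)| *
        ‖((2 / (K : ℂ)) * S)‖ ∧
    ‖((1 / (K : ℂ)) *
        (∑ k ∈ Finset.range (K / 2),
            Complex.exp (2 * π * (φt k : ℝ) * T0 * fd * Complex.I) +
          ∑ k ∈ Finset.range (K / 2),
            Complex.exp (2 * π * ((Kall : ℝ) - 1 - (φt k : ℝ)) * T0 * fd * Complex.I)))‖ ≤
      ‖((2 / (K : ℂ)) * S)‖ := by
  set θ : ℝ := 2 * π * ((Kall : ℝ) - 1) * T0 * fd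
  have hS' : S = ∑ k ∈ Finset.range (K / 2), cexp ((2 * π * φt k * T0 * fd : ℝ) * I) := by
    rw [hS]
    push_cast
    rfl
  have hreflect : ∑ k ∈ Finset.range (K / 2),
      cexp (2 * π * ((Kall : ℝ) - 1 - (φt k : ℝ)) * T0 * fd * I) = cexp (θ * I) * conj S := by
    rw [hS', ← sum_exp_sub_mul_I]
    refine Finset.sum_congr rfl fun k _ => ?_
    congr 1
    push_cast [θ]
    ring
  have hnorm : ‖1 / (K : ℂ) * (S + cexp (θ * I) * conj S)‖ =
      |Real.cos (π * ((Kall : ℝ) - 1) * T0 * fd - arg S)| * ‖2 / (K : ℂ) * S‖ := by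
    rw [norm_mul, norm_add_exp_mul_conj, norm_mul, show θ / 2 = π * ((Kall : ℝ) - 1) * T0 * fd by
      ring]
    simp only [norm_div, norm_one, Complex.norm_ofNat]
    ring
  rw [← hS, hreflect, hnorm]
  exact ⟨rfl, mul_le_of_le_one_left (norm_nonneg _) (abs_cos_le_one _)⟩

theorem stmt8 (K Kall : ℕ) (hK : 0 < K) (hKeven : Even K) (hKall : 0 < Kall)
    (T0 fd : ℝ) (hT0 : 0 < T0) (φt : ℕ → ℤ)
    (S : ℂ)
    (hS : S = ∑ k ∈ Finset.range (K / 2),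
      Complex.exp (2 * π * (φt k : ℝ) * T0 * fd * Complex.I)) :
    ‖((1 / (K : ℂ)) *
        (∑ k ∈ Finset.range (K / 2),
            Complex.exp (2 * π * (φt k : ℝ) * T0 * fd * Complex.I) +
          ∑ k ∈ Finset.range (K / 2),
            Complex.exp (2 * π * ((Kall : ℝ) - 1 - (φt k : ℝ)) * T0 * fd * Complex.I)))‖ =
      |Real.cos (π * ((Kall : ℝ) - 1) * T0 * fd - Complex.arg S)| *
        ‖((2 / (K : ℂ)) * S)‖ ∧
    ‖((1 / (K : ℂ)) *
        (∑ k ∈ Finset.range (K / 2),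
            Complex.exp (2 * π * (φt k : ℝ) * T0 * fd * Complex.I) +
          ∑ k ∈ Finset.range (K / 2),
            Complex.exp (2 * π * ((Kall : ℝ) - 1 - (φt k : ℝ)) * T0 * fd * Complex.I)))‖ ≤
      ‖((2 / (K : ℂ)) * S)‖ :=
  stmt8_general K Kall T0 fd φt S hS
end

section
/- Let K be even, K_B ≤ K/2, T0 > 0, f_d ∈ ℝ. Given φ̃ ∈ ℝ^{K/2} and a perturbation δ ∈ ℝ^{K_B} with |δ_k| ≤ 1/2 for all k applied to the last K_B entries of φ̃, the change in envelope satisfies | E(φ̃, f_d) - E(φ̃ + δ̂, f_d) | ≤ (2/K) · Σ_{k} |1 - e^{i 2π δ_k T0 f_d}| ≤ (2/K) · Σ_k 2π |δ_k T0 f_d| ≤ (π K_B / (K/2)) · |T0 f_d|, where δ̂ is δ extended by zeros and E(ψ, f_d) = |(2/K) Σ_{k=0}^{K/2-1} e^{i2π ψ_k T0 f_d}|. -/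
/-! Writing `exp (i 2π (φ_k + δ_k) T0 fd) = exp (i 2π φ_k T0 fd) · exp (i 2π δ_k T0 fd)` and using that
the first factor has modulus one, the reverse triangle inequality bounds the change of the envelope by
`(2/K) Σ |1 - exp (i 2π δ_k T0 fd)|`. Each term is at most the chord-arc bound `2π |δ_k T0 fd|`, which is
at most `π |T0 fd|` and vanishes outside the last `K_B` indices. -/

open Complex Real

noncomputable def Env (K : ℕ) (T0 fd : ℝ) (ψ : ℕ → ℝ) : ℝ :=
  ‖(2 / (K : ℂ)) * ∑ k ∈ Finset.range (K / 2),
    Complex.exp (2 * π * (ψ k) * T0 * fd * Complex.I)‖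

lemma abs_norm_sum_sub_norm_sum_mul_le {ι R : Type*} [SeminormedRing R] (s : Finset ι)
    (z w : ι → R) :
    |‖∑ i ∈ s, z i‖ - ‖∑ i ∈ s, z i * w i‖| ≤ ∑ i ∈ s, ‖z i‖ * ‖1 - w i‖ :=
  calc |‖∑ i ∈ s, z i‖ - ‖∑ i ∈ s, z i * w i‖|
      ≤ ‖∑ i ∈ s, z i * (1 - w i)‖ := by
        simpa only [mul_sub, mul_one, Finset.sum_sub_distrib] using abs_norm_sub_norm_le _ _
    _ ≤ ∑ i ∈ s, ‖z i‖ * ‖1 - w i‖ :=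
        (norm_sum_le _ _).trans (Finset.sum_le_sum fun i _ => norm_mul_le _ _)

lemma norm_one_sub_exp_ofReal_mul_I_le (x : ℝ) : ‖1 - exp (x * I)‖ ≤ |x| := by
  simpa only [norm_sub_rev, mul_comm, Real.norm_eq_abs] using
    Real.norm_exp_I_mul_ofReal_sub_one_le (x := x)

lemma sum_range_le_mul_of_eq_zero_of_le {f : ℕ → ℝ} {n m : ℕ} {c : ℝ} (hc : 0 ≤ c)
    (hzero : ∀ k < n - m, f k = 0) (hle : ∀ k, f k ≤ c) :
    ∑ k ∈ Finset.range n, f k ≤ m * c := by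
  rw [← Finset.sum_range_add_sum_Ico f (Nat.sub_le n m),
    Finset.sum_eq_zero fun k hk => hzero k (Finset.mem_range.mp hk), zero_add]
  calc ∑ k ∈ Finset.Ico (n - m) n, f k
      ≤ (Finset.Ico (n - m) n).card • c := Finset.sum_le_card_nsmul _ _ _ fun k _ => hle k
    _ ≤ m * c := by
        rw [nsmul_eq_mul, Nat.card_Ico]
        gcongr
        exact_mod_cast (by omega : n - (n - m) ≤ m)

lemma Env_eq (K : ℕ) (T0 fd : ℝ) (ψ : ℕ → ℝ) :
    Env K T0 fd ψ = 2 / K * ‖∑ k ∈ Finset.range (K / 2), exp (2 * π * ψ k * T0 * fd * I)‖ := by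
  rw [Env, norm_mul, norm_div, Complex.norm_ofNat, Complex.norm_natCast]

lemma norm_exp_phase (x T0 fd : ℝ) : ‖exp (2 * π * x * T0 * fd * I)‖ = 1 := by
  exact_mod_cast Complex.norm_exp_ofReal_mul_I (2 * π * x * T0 * fd)

lemma exp_phase_add (φ δ T0 fd : ℝ) : exp (2 * π * ↑(φ + δ) * T0 * fd * I) =
    exp (2 * π * φ * T0 * fd * I) * exp (2 * π * δ * T0 * fd * I) := by
  rw [← Complex.exp_add]; push_cast; ring_nf

lemma abs_Env_sub_Env_add_le (K : ℕ) (T0 fd : ℝ) (φ δ : ℕ → ℝ) :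
    |Env K T0 fd φ - Env K T0 fd (fun k => φ k + δ k)| ≤
      2 / K * ∑ k ∈ Finset.range (K / 2), ‖1 - exp (2 * π * δ k * T0 * fd * I)‖ := by
  have h := abs_norm_sum_sub_norm_sum_mul_le (Finset.range (K / 2))
    (fun k => exp (2 * π * φ k * T0 * fd * I)) (fun k => exp (2 * π * δ k * T0 * fd * I))
  simp only [norm_exp_phase, one_mul, ← exp_phase_add] at h
  rw [Env_eq, Env_eq, ← mul_sub, abs_mul, abs_of_nonneg (by positivity)]
  gcongr

lemma norm_one_sub_exp_phase_le (x T0 fd : ℝ) :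
    ‖1 - exp (2 * π * x * T0 * fd * I)‖ ≤ 2 * π * |x * T0 * fd| :=
  calc ‖1 - exp (2 * π * x * T0 * fd * I)‖
      = ‖1 - exp ((2 * π * (x * T0 * fd) : ℝ) * I)‖ := by push_cast; ring_nf
    _ ≤ 2 * π * |x * T0 * fd| := (norm_one_sub_exp_ofReal_mul_I_le _).trans_eq <| by
      rw [abs_mul, abs_of_pos two_pi_pos]

theorem stmt9_general (K KB : ℕ)
    (T0 fd : ℝ)
    (φt δ : ℕ → ℝ)
    (hδ0 : ∀ k < K / 2 - KB, δ k = 0)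
    (hδ : ∀ k, |δ k| ≤ 1 / 2) :
    |Env K T0 fd φt - Env K T0 fd (fun k => φt k + δ k)| ≤
        (2 / K) * ∑ k ∈ Finset.range (K / 2),
          ‖1 - Complex.exp (2 * π * δ k * T0 * fd * Complex.I)‖ ∧
    (2 / K) * ∑ k ∈ Finset.range (K / 2),
        ‖1 - Complex.exp (2 * π * δ k * T0 * fd * Complex.I)‖ ≤
      (2 / K) * ∑ k ∈ Finset.range (K / 2), 2 * π * |δ k * T0 * fd| ∧
    (2 / K) * ∑ k ∈ Finset.range (K / 2), 2 * π * |δ k * T0 * fd| ≤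
      (π * KB / (K / 2 : ℝ)) * |T0 * fd| := by
  refine ⟨abs_Env_sub_Env_add_le K T0 fd φt δ,
    by gcongr with k; exact norm_one_sub_exp_phase_le _ _ _, ?_⟩
  have hterm (k : ℕ) : 2 * π * |δ k * T0 * fd| ≤ π * |T0 * fd| := by
    have := mul_le_mul_of_nonneg_right (hδ k) (abs_nonneg (T0 * fd))
    rw [mul_assoc (δ k), abs_mul]
    nlinarith [pi_pos]
  have hsum := sum_range_le_mul_of_eq_zero_of_le (by positivity)
    (fun k hk => by rw [hδ0 k hk]; simp) hterm
  calc 2 / K * ∑ k ∈ Finset.range (K / 2), 2 * π * |δ k * T0 * fd|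
      ≤ 2 / K * (KB * (π * |T0 * fd|)) := by gcongr
    _ = π * KB / (K / 2 : ℝ) * |T0 * fd| := by ring

theorem stmt9 (K KB : ℕ) (hK : 0 < K) (hKeven : Even K) (hKB : KB ≤ K / 2)
    (T0 fd : ℝ) (hT0 : 0 < T0)
    (φt δ : ℕ → ℝ)
    (hδ0 : ∀ k < K / 2 - KB, δ k = 0)
    (hδ : ∀ k, |δ k| ≤ 1 / 2) :
    |Env K T0 fd φt - Env K T0 fd (fun k => φt k + δ k)| ≤
        (2 / K) * ∑ k ∈ Finset.range (K / 2),
          ‖1 - Complex.exp (2 * π * δ k * T0 * fd * Complex.I)‖ ∧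
    (2 / K) * ∑ k ∈ Finset.range (K / 2),
        ‖1 - Complex.exp (2 * π * δ k * T0 * fd * Complex.I)‖ ≤
      (2 / K) * ∑ k ∈ Finset.range (K / 2), 2 * π * |δ k * T0 * fd| ∧
    (2 / K) * ∑ k ∈ Finset.range (K / 2), 2 * π * |δ k * T0 * fd| ≤
      (π * KB / (K / 2 : ℝ)) * |T0 * fd| :=
  stmt9_general K KB T0 fd φt δ hδ0 hδ
end

section
/- Let h_{s,0}, h_{s,1} ∈ ℂ be nonzero with |h_{s,0}| = |h_{s,1}|, and let a(θ) = e^{i(2πd/λ)sin θ} with d, λ > 0. Then there exists θ_d ∈ ℝ with |sin θ_d| ≤ 1 such that h_{s,1} - a(θ_d)·h_{s,0} = 0 if and only if there exists an integer z with |arg(h_{s,1}/h_{s,0})·λ/(2πd) + zλ/d| ≤ 1; in particular when d = λ/2 such θ_d always exists. -/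
/-!
Since `‖h₀‖ = ‖h₁‖`, the ratio `r = h₁ / h₀` lies on the unit circle, so `exp (t i) = r` exactly
when `t ≡ arg r (mod 2π)`. With `c = 2πd/λ`, a solution `θ` exists iff some `(arg r + 2πn) / c`
lies in `[-1, 1] = range sin`; for `d = λ/2` the choice `n = 0` gives `arg r / π ∈ [-1, 1]`.
-/

open Complex Real

theorem Complex.exp_arg_mul_I_of_norm_eq_one {r : ℂ} (hr : ‖r‖ = 1) : exp (arg r * I) = r := by
  simpa [hr] using norm_mul_exp_arg_mul_I r

theorem Complex.exp_ofReal_mul_I_eq_iff_of_norm_eq_one {r : ℂ} (hr : ‖r‖ = 1) (t : ℝ) :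
    exp (t * I) = r ↔ ∃ n : ℤ, t = arg r + n * (2 * π) := by
  conv_lhs => rw [← exp_arg_mul_I_of_norm_eq_one hr, exp_eq_exp_iff_exists_int]
  refine exists_congr fun n => ?_
  rw [show (arg r : ℂ) * I + n * (2 * π * I) = ((arg r + n * (2 * π) : ℝ) : ℂ) * I by
    push_cast; ring, mul_left_inj' I_ne_zero, ofReal_inj]

theorem Real.exists_sin_eq_iff (x : ℝ) : (∃ θ, sin θ = x) ↔ |x| ≤ 1 := by
  rw [← Set.mem_range, range_sin, Set.mem_Icc, abs_le]

theorem Complex.exists_exp_mul_sin_mul_I_eq_iff {r : ℂ} (hr : ‖r‖ = 1) {c : ℝ} (hc : c ≠ 0) :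
    (∃ θ : ℝ, exp ((c * Real.sin θ : ℝ) * I) = r) ↔ ∃ n : ℤ, |(arg r + n * (2 * π)) / c| ≤ 1 := by
  simp_rw [exp_ofReal_mul_I_eq_iff_of_norm_eq_one hr]
  rw [exists_comm]
  refine exists_congr fun n => ?_
  simp_rw [← exists_sin_eq_iff, eq_div_iff hc, mul_comm (Real.sin _) c]

theorem stmt15_general (h0 h1 : ℂ) (hh0 : h0 ≠ 0)
    (heq : ‖h0‖ = ‖h1‖)
    (d lam : ℝ) (hd : 0 < d) (hlam : 0 < lam) :
    ((∃ θd : ℝ, h1 - Complex.exp ((2 * π * d / lam * Real.sin θd : ℝ) * Complex.I) * h0 = 0) ↔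
      ∃ z : ℤ, |Complex.arg (h1 / h0) * lam / (2 * π * d) + z * lam / d| ≤ 1) ∧
    (d = lam / 2 →
      ∃ θd : ℝ, h1 - Complex.exp ((2 * π * d / lam * Real.sin θd : ℝ) * Complex.I) * h0 = 0) := by
  have hr : ‖h1 / h0‖ = 1 := by rw [norm_div, ← heq, div_self (norm_ne_zero_iff.mpr hh0)]
  have hc : 2 * π * d / lam ≠ 0 := by positivity
  have solvable_iff : (∃ θd : ℝ, h1 - exp ((2 * π * d / lam * Real.sin θd : ℝ) * I) * h0 = 0) ↔
      ∃ z : ℤ, |arg (h1 / h0) * lam / (2 * π * d) + z * lam / d| ≤ 1 := by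
    simp_rw [sub_eq_zero, eq_comm (a := h1), ← eq_div_iff hh0,
      exists_exp_mul_sin_mul_I_eq_iff hr hc]
    refine exists_congr fun z => ?_
    rw [show (arg (h1 / h0) + z * (2 * π)) / (2 * π * d / lam)
        = arg (h1 / h0) * lam / (2 * π * d) + z * lam / d by field_simp]
  refine ⟨solvable_iff, fun hdl => solvable_iff.mpr ⟨0, ?_⟩⟩
  rw [hdl, Int.cast_zero, zero_mul, zero_div, add_zero,
    show 2 * π * (lam / 2) = π * lam by ring, mul_div_mul_right _ _ hlam.ne', abs_div,
    abs_of_pos pi_pos, div_le_one pi_pos]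
  exact abs_arg_le_pi _

theorem stmt15 (h0 h1 : ℂ) (hh0 : h0 ≠ 0) (hh1 : h1 ≠ 0)
    (heq : ‖h0‖ = ‖h1‖)
    (d lam : ℝ) (hd : 0 < d) (hlam : 0 < lam) :
    ((∃ θd : ℝ, h1 - Complex.exp ((2 * π * d / lam * Real.sin θd : ℝ) * Complex.I) * h0 = 0) ↔
      ∃ z : ℤ, |Complex.arg (h1 / h0) * lam / (2 * π * d) + z * lam / d| ≤ 1) ∧
    (d = lam / 2 →
      ∃ θd : ℝ, h1 - Complex.exp ((2 * π * d / lam * Real.sin θd : ℝ) * Complex.I) * h0 = 0) :=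
  stmt15_general h0 h1 hh0 heq d lam hd hlam
end
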